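/- arXiv:1903.10198 — 3 statements merged into one kernel-verified Lean document; each statement's English description precedes it below -/
import Mathlib

section
/- If the epsilon initial conditions T_{−1}^(n) = 0, T_0^(n) = S_n, T_1^(n) = 1/(ΔS_n) are used together with the recursion T_{k+2}^(n) = T_k^(n+1) + [T_{k+1}^(n) − T_{k−1}^(n+1)]·[T_k^(n+1) − T_k^(n)]/[T_{k+1}^(n+1) − T_{k+1}^(n)] for k ≥ 0, then T_k^(n) = ε_k^(n) for all k ≥ 0 and all n, where ε is Wynn's epsilon algorithm applied to (S_n). -/
/-- The recursion `T_{k+2}^{(n)} = T_k^{(n+1)} + [T_{k+1}^{(n)} - T_{k-1}^{(n+1)}]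
[T_k^{(n+1)} - T_k^{(n)}]/[T_{k+1}^{(n+1)} - T_{k+1}^{(n)}]` together with the
epsilon initial conditions reproduces Wynn's epsilon algorithm.  Here `T j n`
and `E j n` stand for `T_{j-1}^{(n)}` and `ε_{j-1}^{(n)}` (index shifted by
one); the conclusion `T k = ε_k` for all `k ≥ 0` reads `T (k+1) = E (k+1)`. -/
theorem difference_form_recovers_epsilon (S : ℕ → ℝ) (T E : ℕ → ℕ → ℝ)
    (hE0 : ∀ n, E 0 n = 0) (hE1 : ∀ n, E 1 n = S n)
    (hErec : ∀ k n, E (k + 2) n = E k (n + 1) + 1 / (E (k + 1) (n + 1) - E (k + 1) n))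
    (hEne : ∀ k n, E (k + 1) (n + 1) - E (k + 1) n ≠ 0)
    (hT0 : ∀ n, T 0 n = 0) (hT1 : ∀ n, T 1 n = S n)
    (hT2 : ∀ n, T 2 n = 1 / (S (n + 1) - S n))
    (hTrec : ∀ k n, T (k + 3) n = T (k + 1) (n + 1) +
      (T (k + 2) n - T k (n + 1)) * (T (k + 1) (n + 1) - T (k + 1) n) /
        (T (k + 2) (n + 1) - T (k + 2) n))
    (hTne : ∀ k n, T (k + 1) (n + 1) - T (k + 1) n ≠ 0) :
    ∀ k n, T (k + 1) n = E (k + 1) n := by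
  intro k
  induction k using Nat.strong_induction_on with
  | _ k ih =>
    match k, ih with
    | 0, _ => intro n; rw [hT1, hE1]
    | 1, _ =>
      intro n
      rw [hT2, hErec 0 n, hE0, hE1, hE1, zero_add]
    | (k+2), ih =>
      intro n
      have h0 : ∀ m, T k m = E k m := by
        cases k with
        | zero => intro m; rw [hT0, hE0]
        | succ j => exact fun m => ih j (by omega) m
      have h1 : ∀ m, T (k+1) m = E (k+1) m := ih k (by omega)
      have h2 : ∀ m, T (k+2) m = E (k+2) m := ih (k+1) (by omega)
      rw [hTrec k n, hErec (k+1) n]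
      simp only [h0, h1, h2]
      have e : E (k+1+1) = E (k+2) := rfl
      rw [e]
      have key : E (k+2) n - E k (n+1) = 1 / (E (k+1) (n+1) - E (k+1) n) := by
        rw [hErec k n]; ring
      rw [key]
      have d1 := hEne k n
      have d2 := hEne (k+1) n
      field_simp
end

section
/- For each n ∈ ℕ and all z ≥ 0, the reduced Bessel function of half-integral order satisfies 0 < k̂_{n+1/2}(z) ≤ k̂_{n+1/2}(0) = 2^n (1/2)_n, where (1/2)_n is the Pochhammer symbol, i.e. k̂_{n+1/2}(0) = (2n)!/(2^n n!). -/
open Finset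

lemma desc_aux (n : ℕ) : ∀ j : ℕ, 2 ^ j * Nat.descFactorial n j ≤ Nat.descFactorial (2 * n) j := by
  intro j
  induction j with
  | zero => simp
  | succ j ih =>
    rw [Nat.descFactorial_succ, Nat.descFactorial_succ, pow_succ]
    calc 2 ^ j * 2 * ((n - j) * Nat.descFactorial n j)
        = (2 * (n - j)) * (2 ^ j * Nat.descFactorial n j) := by ring
      _ ≤ (2 * n - j) * Nat.descFactorial (2 * n) j :=
          Nat.mul_le_mul (by omega) ih

lemma nat_aux (n j : ℕ) (hj : j ≤ n) :
    2 ^ j * (Nat.factorial n * Nat.factorial (2 * n - j)) ≤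
      Nat.factorial (2 * n) * Nat.factorial (n - j) := by
  have h1 := Nat.factorial_mul_descFactorial hj
  have h2 := Nat.factorial_mul_descFactorial (show j ≤ 2 * n by omega)
  calc 2 ^ j * (Nat.factorial n * Nat.factorial (2 * n - j))
      = (2 ^ j * Nat.descFactorial n j) * (Nat.factorial (n - j) * Nat.factorial (2 * n - j)) := by
        rw [← h1]; ring
    _ ≤ Nat.descFactorial (2 * n) j * (Nat.factorial (n - j) * Nat.factorial (2 * n - j)) :=
        Nat.mul_le_mul_right _ (desc_aux n j)
    _ = Nat.factorial (2 * n) * Nat.factorial (n - j) := by rw [← h2]; ring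

lemma coeff_aux (n j : ℕ) (hj : j ≤ n) :
    ((Nat.factorial (2 * n - j) : ℝ) /
        ((Nat.factorial j : ℝ) * (Nat.factorial (n - j) : ℝ))) / 2 ^ (n - j) ≤
      ((Nat.factorial (2 * n) : ℝ) / (2 ^ n * (Nat.factorial n : ℝ))) / (Nat.factorial j : ℝ) := by
  have h := nat_aux n j hj
  have hc : (2 : ℝ) ^ j * ((Nat.factorial n : ℝ) * (Nat.factorial (2 * n - j) : ℝ)) ≤
      (Nat.factorial (2 * n) : ℝ) * (Nat.factorial (n - j) : ℝ) := by
    exact_mod_cast h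
  have hpow : (2 : ℝ) ^ n = 2 ^ (n - j) * 2 ^ j := by
    rw [← pow_add]; congr 1; omega
  have hfj : (0 : ℝ) < (Nat.factorial j : ℝ) := by exact_mod_cast Nat.factorial_pos j
  have hfnj : (0 : ℝ) < (Nat.factorial (n - j) : ℝ) := by exact_mod_cast Nat.factorial_pos _
  have hfn : (0 : ℝ) < (Nat.factorial n : ℝ) := by exact_mod_cast Nat.factorial_pos n
  rw [div_div, div_div, div_le_div_iff₀ (by positivity) (by positivity)]
  rw [hpow]
  have hmul := mul_le_mul_of_nonneg_right hc
    (show (0:ℝ) ≤ (Nat.factorial j : ℝ) * 2 ^ (n - j) by positivity)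
  calc (Nat.factorial (2 * n - j) : ℝ) *
        (2 ^ (n - j) * 2 ^ j * (Nat.factorial n : ℝ) * (Nat.factorial j : ℝ))
      = 2 ^ j * ((Nat.factorial n : ℝ) * (Nat.factorial (2 * n - j) : ℝ)) *
          ((Nat.factorial j : ℝ) * 2 ^ (n - j)) := by ring
    _ ≤ (Nat.factorial (2 * n) : ℝ) * (Nat.factorial (n - j) : ℝ) *
          ((Nat.factorial j : ℝ) * 2 ^ (n - j)) := hmul
    _ = (Nat.factorial (2 * n) : ℝ) *
          ((Nat.factorial j : ℝ) * (Nat.factorial (n - j) : ℝ) * 2 ^ (n - j)) := by ring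

lemma poch_aux (n : ℕ) :
    (Nat.factorial (2 * n) : ℝ) / (2 ^ n * (Nat.factorial n : ℝ)) =
      2 ^ n * (ascPochhammer ℝ n).eval (1 / 2 : ℝ) := by
  induction n with
  | zero => simp
  | succ n ih =>
    have hf : ((Nat.factorial (2 * (n + 1))) : ℝ) =
        (2 * n + 2) * ((2 * n + 1) * (Nat.factorial (2 * n) : ℝ)) := by
      have h : 2 * (n + 1) = (2 * n + 1) + 1 := by ring
      rw [h, Nat.factorial_succ, Nat.factorial_succ]
      push_cast
      ring
    have hn1 : ((Nat.factorial (n + 1)) : ℝ) = (n + 1) * (Nat.factorial n : ℝ) := by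
      rw [Nat.factorial_succ]; push_cast; ring
    have hfn : (Nat.factorial n : ℝ) ≠ 0 := by exact_mod_cast (Nat.factorial_pos n).ne'
    have key : ((Nat.factorial (2 * (n + 1))) : ℝ) / (2 ^ (n + 1) * (Nat.factorial (n + 1) : ℝ)) =
        ((Nat.factorial (2 * n)) : ℝ) / (2 ^ n * (Nat.factorial n : ℝ)) * ((1 / 2 : ℝ) + n) * 2 := by
      rw [hf, hn1, pow_succ]
      field_simp
      ring
    rw [ascPochhammer_succ_right, Polynomial.eval_mul, Polynomial.eval_add, Polynomial.eval_X,
      Polynomial.eval_natCast, key, ih]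
    ring

/-- Boundedness of the reduced Bessel functions of half-integral order:
`0 < k̂_{n+1/2}(z) ≤ k̂_{n+1/2}(0) = 2^n (1/2)_n = (2n)!/(2^n n!)` for `z ≥ 0`,
where `k̂_{n+1/2}(z) = e^{-z} θ_n(z)` and `θ_n` is the `n`th Bessel polynomial. -/
theorem reduced_bessel_half_integral_bounds (n : ℕ) (z : ℝ) (hz : 0 ≤ z) :
    0 < Real.exp (-z) *
        (∑ j ∈ range (n + 1),
          ((Nat.factorial (2 * n - j) : ℝ) /
            ((Nat.factorial j : ℝ) * (Nat.factorial (n - j) : ℝ))) *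
            (z ^ j / 2 ^ (n - j))) ∧
    Real.exp (-z) *
        (∑ j ∈ range (n + 1),
          ((Nat.factorial (2 * n - j) : ℝ) /
            ((Nat.factorial j : ℝ) * (Nat.factorial (n - j) : ℝ))) *
            (z ^ j / 2 ^ (n - j))) ≤
      (Nat.factorial (2 * n) : ℝ) / (2 ^ n * (Nat.factorial n : ℝ)) ∧
    Real.exp (-(0 : ℝ)) *
        (∑ j ∈ range (n + 1),
          ((Nat.factorial (2 * n - j) : ℝ) /
            ((Nat.factorial j : ℝ) * (Nat.factorial (n - j) : ℝ))) *
            ((0 : ℝ) ^ j / 2 ^ (n - j))) =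
      (Nat.factorial (2 * n) : ℝ) / (2 ^ n * (Nat.factorial n : ℝ)) ∧
    (Nat.factorial (2 * n) : ℝ) / (2 ^ n * (Nat.factorial n : ℝ)) =
      2 ^ n * (ascPochhammer ℝ n).eval (1 / 2 : ℝ) := by
  set K : ℝ := (Nat.factorial (2 * n) : ℝ) / (2 ^ n * (Nat.factorial n : ℝ)) with hK
  have hKpos : 0 < K := by
    have h1 : (0 : ℝ) < (Nat.factorial (2 * n) : ℝ) := by exact_mod_cast Nat.factorial_pos _
    have h2 : (0 : ℝ) < (Nat.factorial n : ℝ) := by exact_mod_cast Nat.factorial_pos _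
    positivity
  refine ⟨?_, ?_, ?_, ?_⟩
  · apply mul_pos (Real.exp_pos _)
    apply Finset.sum_pos'
    · intro j hj
      have h1 : (0 : ℝ) < (Nat.factorial (2 * n - j) : ℝ) := by exact_mod_cast Nat.factorial_pos _
      have h2 : (0 : ℝ) < (Nat.factorial j : ℝ) := by exact_mod_cast Nat.factorial_pos _
      have h3 : (0 : ℝ) < (Nat.factorial (n - j) : ℝ) := by exact_mod_cast Nat.factorial_pos _
      positivity
    · refine ⟨0, Finset.mem_range.2 (Nat.succ_pos n), ?_⟩
      have h1 : (0 : ℝ) < (Nat.factorial (2 * n - 0) : ℝ) := by exact_mod_cast Nat.factorial_pos _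
      have h2 : (0 : ℝ) < (Nat.factorial 0 : ℝ) := by exact_mod_cast Nat.factorial_pos _
      have h3 : (0 : ℝ) < (Nat.factorial (n - 0) : ℝ) := by exact_mod_cast Nat.factorial_pos _
      positivity
  · have hsum : (∑ j ∈ range (n + 1),
        ((Nat.factorial (2 * n - j) : ℝ) /
          ((Nat.factorial j : ℝ) * (Nat.factorial (n - j) : ℝ))) *
          (z ^ j / 2 ^ (n - j))) ≤ K * Real.exp z := by
      calc (∑ j ∈ range (n + 1),
            ((Nat.factorial (2 * n - j) : ℝ) /
              ((Nat.factorial j : ℝ) * (Nat.factorial (n - j) : ℝ))) *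
              (z ^ j / 2 ^ (n - j)))
          ≤ ∑ j ∈ range (n + 1), K * (z ^ j / (Nat.factorial j : ℝ)) := by
            apply Finset.sum_le_sum
            intro j hj
            have hjn : j ≤ n := Nat.lt_succ_iff.1 (Finset.mem_range.1 hj)
            have hc := coeff_aux n j hjn
            have hzj : (0 : ℝ) ≤ z ^ j := pow_nonneg hz j
            calc ((Nat.factorial (2 * n - j) : ℝ) /
                  ((Nat.factorial j : ℝ) * (Nat.factorial (n - j) : ℝ))) * (z ^ j / 2 ^ (n - j))
                = (((Nat.factorial (2 * n - j) : ℝ) /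
                    ((Nat.factorial j : ℝ) * (Nat.factorial (n - j) : ℝ))) / 2 ^ (n - j)) * z ^ j := by
                  ring
              _ ≤ (K / (Nat.factorial j : ℝ)) * z ^ j := mul_le_mul_of_nonneg_right hc hzj
              _ = K * (z ^ j / (Nat.factorial j : ℝ)) := by ring
        _ = K * ∑ j ∈ range (n + 1), z ^ j / (Nat.factorial j : ℝ) := by
            rw [Finset.mul_sum]
        _ ≤ K * Real.exp z := by
            exact mul_le_mul_of_nonneg_left (Real.sum_le_exp_of_nonneg hz _) hKpos.le
    calc Real.exp (-z) * (∑ j ∈ range (n + 1),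
          ((Nat.factorial (2 * n - j) : ℝ) /
            ((Nat.factorial j : ℝ) * (Nat.factorial (n - j) : ℝ))) *
            (z ^ j / 2 ^ (n - j)))
        ≤ Real.exp (-z) * (K * Real.exp z) :=
          mul_le_mul_of_nonneg_left hsum (Real.exp_pos _).le
      _ = K * (Real.exp (-z) * Real.exp z) := by ring
      _ = K := by rw [← Real.exp_add]; simp
  · rw [Finset.sum_eq_single_of_mem 0 (Finset.mem_range.2 (Nat.succ_pos n))]
    · have hfn : (Nat.factorial n : ℝ) ≠ 0 := by
        exact_mod_cast (Nat.factorial_pos n).ne'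
      simp only [Nat.sub_zero, Nat.mul_sub, Nat.factorial_zero, pow_zero, neg_zero, Real.exp_zero,
        Nat.cast_one, one_mul, Nat.mul_zero]
      rw [hK]
      field_simp
    · intro j _ hj0
      have : (0 : ℝ) ^ j = 0 := zero_pow hj0
      rw [this]
      simp
  · rw [hK]; exact poch_aux n
end

section
/- The Bessel polynomial θ_n(z) = e^z k̂_{n+1/2}(z) satisfies lim_{n→∞} θ_n(z)·2^n n!/(2n)! = e^z for each fixed z ∈ ℝ. -/
open Finset Filter

/-- The ratio `c n j = n! (2n-j)! 2^j / ((n-j)! (2n)!)`. -/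
noncomputable def besselC (n j : ℕ) : ℝ :=
  ((Nat.factorial n : ℝ) * (Nat.factorial (2 * n - j) : ℝ) * 2 ^ j) /
    ((Nat.factorial (n - j) : ℝ) * (Nat.factorial (2 * n) : ℝ))

lemma besselC_eq_prod {n j : ℕ} (h : j ≤ n) :
    besselC n j = ∏ i ∈ range j, (2 * ((n : ℝ) - i)) / ((2 * n : ℝ) - i) := by
  induction j with
  | zero =>
      simp only [besselC, range_zero, prod_empty, Nat.sub_zero, pow_zero, mul_one]
      rw [div_self]
      positivity
  | succ j ih =>
      have hj : j ≤ n := by omega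
      have f1 : (Nat.factorial (n - j) : ℝ) =
          ((n : ℝ) - j) * (Nat.factorial (n - (j + 1)) : ℝ) := by
        rw [show n - j = (n - (j + 1)) + 1 by omega, Nat.factorial_succ]
        push_cast [Nat.cast_sub (show j + 1 ≤ n by omega)]
        ring
      have f2 : (Nat.factorial (2 * n - j) : ℝ) =
          ((2 * n : ℝ) - j) * (Nat.factorial (2 * n - (j + 1)) : ℝ) := by
        rw [show 2 * n - j = (2 * n - (j + 1)) + 1 by omega, Nat.factorial_succ]
        push_cast [Nat.cast_sub (show j + 1 ≤ 2 * n by omega)]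
        ring
      have h1 : ((n : ℝ) - j) ≠ 0 := by
        have : (j : ℝ) < (n : ℝ) := by exact_mod_cast (by omega : j < n)
        linarith
      have h2 : ((2 * n : ℝ) - j) ≠ 0 := by
        have : (j : ℝ) < (2 * n : ℝ) := by exact_mod_cast (by omega : j < 2 * n)
        linarith
      have h3 : (Nat.factorial (n - (j + 1)) : ℝ) ≠ 0 := by
        exact_mod_cast (Nat.factorial_ne_zero _)
      have h4 : (Nat.factorial (2 * n) : ℝ) ≠ 0 := by
        exact_mod_cast (Nat.factorial_ne_zero _)
      rw [prod_range_succ, ← ih hj]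
      simp only [besselC]
      rw [f1, f2]
      field_simp
      ring

lemma besselC_nonneg (n j : ℕ) : 0 ≤ besselC n j := by
  unfold besselC; positivity

lemma besselC_le_one {n j : ℕ} (h : j ≤ n) : besselC n j ≤ 1 := by
  rw [besselC_eq_prod h]
  apply Finset.prod_le_one
  · intro i hi
    have hi' : i < j := mem_range.mp hi
    have h1 : (i : ℝ) ≤ (n : ℝ) := by exact_mod_cast (by omega : i ≤ n)
    have h2 : (i : ℝ) < (2 * n : ℝ) := by exact_mod_cast (by omega : i < 2 * n)
    apply div_nonneg <;> linarith
  · intro i hi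
    have hi' : i < j := mem_range.mp hi
    have h2 : (i : ℝ) < (2 * n : ℝ) := by exact_mod_cast (by omega : i < 2 * n)
    rw [div_le_one (by linarith)]
    have : (0:ℝ) ≤ i := Nat.cast_nonneg i
    linarith

lemma besselC_tendsto (j : ℕ) :
    Tendsto (fun n => besselC n j) atTop (nhds 1) := by
  have key : ∀ i : ℕ, Tendsto (fun n : ℕ => (2 * ((n : ℝ) - i)) / ((2 * n : ℝ) - i))
      atTop (nhds 1) := by
    intro i
    have hden : Tendsto (fun n : ℕ => (2 * n : ℝ) - i) atTop atTop := by
      apply tendsto_atTop_add_const_right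
      exact (tendsto_natCast_atTop_atTop (R := ℝ)).const_mul_atTop two_pos
    have hsmall : Tendsto (fun n : ℕ => (i : ℝ) / ((2 * n : ℝ) - i)) atTop (nhds 0) :=
      tendsto_const_nhds.div_atTop hden
    have : Tendsto (fun n : ℕ => 1 - (i : ℝ) / ((2 * n : ℝ) - i)) atTop (nhds 1) := by
      simpa using tendsto_const_nhds.sub hsmall
    apply this.congr'
    filter_upwards [eventually_ge_atTop (i + 1)] with n hn
    have h2 : ((2 * n : ℝ) - i) ≠ 0 := by
      have : (i : ℝ) < (2 * n : ℝ) := by exact_mod_cast (by omega : i < 2 * n)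
      linarith
    field_simp
    ring
  have hprod : Tendsto (fun n : ℕ => ∏ i ∈ range j, (2 * ((n : ℝ) - i)) / ((2 * n : ℝ) - i))
      atTop (nhds (∏ i ∈ range j, (1:ℝ))) :=
    tendsto_finset_prod _ (fun i _ => key i)
  simp only [prod_const_one] at hprod
  apply hprod.congr'
  filter_upwards [eventually_ge_atTop j] with n hn
  exact (besselC_eq_prod hn).symm

/-- Asymptotics of the Bessel polynomials: for each fixed `z ∈ ℝ`,
`θ_n(z) · 2^n n!/(2n)! → e^z` as `n → ∞`, where
`θ_n(z) = Σ_{j=0}^n ((2n-j)!/((n-j)! j!)) z^j/2^{n-j}`. -/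
theorem bessel_polynomial_asymptotics (z : ℝ) :
    Tendsto
      (fun n : ℕ =>
        (∑ j ∈ range (n + 1),
          ((Nat.factorial (2 * n - j) : ℝ) /
            ((Nat.factorial (n - j) : ℝ) * (Nat.factorial j : ℝ))) *
            (z ^ j / 2 ^ (n - j))) *
          (2 ^ n * (Nat.factorial n : ℝ) / (Nat.factorial (2 * n) : ℝ)))
      atTop (nhds (Real.exp z)) := by
  set f : ℕ → ℕ → ℝ := fun n j => if j ≤ n then besselC n j * (z ^ j / Nat.factorial j) else 0
    with hf
  have hterm : ∀ n j, j ≤ n →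
      ((Nat.factorial (2 * n - j) : ℝ) /
        ((Nat.factorial (n - j) : ℝ) * (Nat.factorial j : ℝ))) *
        (z ^ j / 2 ^ (n - j)) *
        (2 ^ n * (Nat.factorial n : ℝ) / (Nat.factorial (2 * n) : ℝ)) =
      besselC n j * (z ^ j / Nat.factorial j) := by
    intro n j h
    have hp : (2 : ℝ) ^ n = 2 ^ (n - j) * 2 ^ j := by
      rw [← pow_add, Nat.sub_add_cancel h]
    have h1 : (Nat.factorial (n - j) : ℝ) ≠ 0 := by exact_mod_cast Nat.factorial_ne_zero _
    have h2 : (Nat.factorial j : ℝ) ≠ 0 := by exact_mod_cast Nat.factorial_ne_zero _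
    have h3 : (Nat.factorial (2 * n) : ℝ) ≠ 0 := by exact_mod_cast Nat.factorial_ne_zero _
    have h4 : (2 : ℝ) ^ (n - j) ≠ 0 := by positivity
    unfold besselC
    rw [hp]
    field_simp
  have hsum : ∀ n, (∑ j ∈ range (n + 1),
      ((Nat.factorial (2 * n - j) : ℝ) /
        ((Nat.factorial (n - j) : ℝ) * (Nat.factorial j : ℝ))) *
        (z ^ j / 2 ^ (n - j))) *
      (2 ^ n * (Nat.factorial n : ℝ) / (Nat.factorial (2 * n) : ℝ)) = ∑' j, f n j := by
    intro n
    rw [Finset.sum_mul, (tsum_eq_sum (s := range (n + 1)) ?_)]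
    · apply Finset.sum_congr rfl
      intro j hj
      have hj' : j ≤ n := by exact Nat.lt_succ_iff.mp (mem_range.mp hj)
      rw [hterm n j hj', hf]
      simp [hj']
    · intro j hj
      have : ¬ j ≤ n := fun h => hj (mem_range.mpr (Nat.lt_succ_of_le h))
      simp [hf, this]
  have hexp : Real.exp z = ∑' j : ℕ, z ^ j / Nat.factorial j := by
    rw [Real.exp_eq_exp_ℝ, NormedSpace.exp_eq_tsum_div]
  rw [hexp]
  apply Tendsto.congr (fun n => (hsum n).symm)
  apply tendsto_tsum_of_dominated_convergence
    (bound := fun j => |z| ^ j / Nat.factorial j)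
    (Real.summable_pow_div_factorial |z|)
  · intro j
    have := (besselC_tendsto j).mul_const (z ^ j / Nat.factorial j)
    rw [one_mul] at this
    apply this.congr'
    filter_upwards [eventually_ge_atTop j] with n hn
    simp [hf, hn]
  · filter_upwards with n j
    by_cases h : j ≤ n
    · simp only [hf, if_pos h, Real.norm_eq_abs, abs_mul]
      rw [abs_of_nonneg (besselC_nonneg n j)]
      calc besselC n j * |z ^ j / Nat.factorial j|
          ≤ 1 * |z ^ j / Nat.factorial j| := by
            apply mul_le_mul_of_nonneg_right (besselC_le_one h) (abs_nonneg _)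
        _ = |z| ^ j / Nat.factorial j := by
            rw [one_mul, abs_div, abs_pow, Nat.abs_cast]
    · simp only [hf, if_neg h, norm_zero]
      positivity
end
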